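/- arXiv:1106.4882 — 2 statements merged into one kernel-verified Lean document; each statement's English description precedes it below -/
import Mathlib

section
/- Let n ≥ 1 and let u₁, …, uₙ be real numbers. In the field K = HahnSeries ℝ ℂ of Hahn series with real exponents and complex coefficients, write T^λ for the Hahn series with single term 1·T^λ (HahnSeries.single λ 1), and for nonzero f ∈ K let ord(f) denote the least element of its support. Consider the system of equations T^{uᵢ}·yᵢ = T^{1−(u₁+⋯+uₙ)}·(y₁⋯yₙ)⁻¹ (i = 1, …, n) in unknowns y₁, …, yₙ ∈ K with each yᵢ ≠ 0 and ord(yᵢ) = 0. Then: (a) the system has a solution if and only if uᵢ = 1/(n+1) for every i; (b) when uᵢ = 1/(n+1) for all i, the solutions are exactly y₁ = ⋯ = yₙ = ζ·1 where ζ ∈ ℂ satisfies ζ^{n+1} = 1. -/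
/-- The monomial `T^λ` (with coefficient `1`) in the Hahn series field
`K = HahnSeries ℝ ℂ`. -/
noncomputable def Tpow (lam : ℝ) : HahnSeries ℝ ℂ := HahnSeries.single lam (1 : ℂ)

/-!
Taking orders in the `i`-th equation gives `uᵢ = 1 - ∑ⱼ uⱼ` for every `i`, which forces all `uᵢ`
to equal `1/(n+1)`. Then `T^{uᵢ} = T^{1 - ∑ u}` cancels, leaving `yᵢ = (y₁⋯yₙ)⁻¹`: all `yᵢ` equal a
common `z` with `z^{n+1} = 1`, and since `ℂ` is algebraically closed such a `z` is a constant.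
-/

namespace HahnSeries

theorem order_prod {Γ R ι : Type*} [AddCommMonoid Γ] [LinearOrder Γ] [IsOrderedCancelAddMonoid Γ]
    [CommSemiring R] [NoZeroDivisors R] [Nontrivial R] (s : Finset ι) (x : ι → HahnSeries Γ R)
    (hx : ∀ i ∈ s, x i ≠ 0) :
    (∏ i ∈ s, x i).order = ∑ i ∈ s, (x i).order := by
  classical
  induction s using Finset.induction_on with
  | empty => simp
  | insert a s ha ih =>
    rw [Finset.forall_mem_insert] at hx
    rw [Finset.prod_insert ha, Finset.sum_insert ha,
      order_mul hx.1 (Finset.prod_ne_zero_iff.2 hx.2), ih hx.2]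

theorem order_inv {Γ R : Type*} [AddCommGroup Γ] [LinearOrder Γ]
    [IsOrderedAddMonoid Γ] [Field R] {x : HahnSeries Γ R} (hx : x ≠ 0) :
    x⁻¹.order = -x.order := by
  have h := congrArg order (mul_inv_cancel₀ hx)
  rw [order_mul hx (inv_ne_zero hx), order_one] at h
  exact eq_neg_of_add_eq_zero_right h

end HahnSeries

theorem exists_eq_of_pow_eq_one {K L : Type*} [Field K] [IsAlgClosed K] [CommRing L]
    [IsDomain L] (f : K →+* L) {m : ℕ} (hm : m ≠ 0) {z : L} (hz : z ^ m = 1) :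
    ∃ ζ : K, ζ ^ m = 1 ∧ f ζ = z := by
  have hroot : ((Polynomial.X ^ m - 1 : Polynomial K).map f).IsRoot z := by simp [hz]
  obtain ⟨ζ, rfl⟩ := (IsAlgClosed.splits _).mem_range_of_isRoot
    (by simpa using Polynomial.X_pow_sub_C_ne_zero (Nat.pos_of_ne_zero hm) (1 : K)) hroot
  exact ⟨ζ, f.injective (by simpa using hz), rfl⟩

theorem forall_eq_one_sub_sum_iff {K ι : Type*} [Field K] [CharZero K] [Fintype ι]
    (u : ι → K) : (∀ i, u i = 1 - ∑ j, u j) ↔ ∀ i, u i = 1 / (Fintype.card ι + 1) := by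
  have hcard : (Fintype.card ι + 1 : K) ≠ 0 := Nat.cast_add_one_ne_zero _
  have sum_of_const {c : K} (hc : ∀ i, u i = c) : ∑ j, u j = Fintype.card ι * c := by
    simp [hc]
  constructor
  · intro hu i
    rw [hu i, eq_div_iff hcard]
    linear_combination -sum_of_const hu
  · intro hu i
    rw [sum_of_const hu, hu i]
    field_simp
    ring

theorem forall_eq_inv_prod_iff {G ι : Type*} [CommGroupWithZero G] [Fintype ι] {y : ι → G}
    (hy : ∀ i, y i ≠ 0) :
    (∀ i, y i = (∏ j, y j)⁻¹) ↔ ∃ z : G, z ^ (Fintype.card ι + 1) = 1 ∧ ∀ i, y i = z := by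
  constructor
  · intro h
    have hprod : ∏ j, y j = (∏ j, y j)⁻¹ ^ Fintype.card ι := by
      conv_lhs => rw [Finset.prod_congr rfl fun j _ => h j]
      simp
    refine ⟨(∏ j, y j)⁻¹, ?_, h⟩
    rw [pow_succ, ← hprod, mul_inv_cancel₀ (Finset.prod_ne_zero_iff.2 fun j _ => hy j)]
  · rintro ⟨z, hz, hyz⟩ i
    simp only [hyz, Finset.prod_const, Finset.card_univ]
    exact eq_inv_of_mul_eq_one_left (by rw [← pow_succ', hz])

theorem Tpow_ne_zero (lam : ℝ) : Tpow lam ≠ 0 :=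
  HahnSeries.single_ne_zero one_ne_zero

theorem order_Tpow (lam : ℝ) : (Tpow lam).order = lam :=
  HahnSeries.order_single one_ne_zero

def IsCriticalPoint {n : ℕ} (u : Fin n → ℝ) (y : Fin n → HahnSeries ℝ ℂ) : Prop :=
  (∀ i, y i ≠ 0 ∧ (y i).order = 0) ∧
    ∀ i, Tpow (u i) * y i = Tpow (1 - ∑ j, u j) * (∏ j, y j)⁻¹

section

variable {n : ℕ} {u : Fin n → ℝ} {y : Fin n → HahnSeries ℝ ℂ}

theorem IsCriticalPoint.eq_one_sub_sum (hy : IsCriticalPoint u y) (i : Fin n) :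
    u i = 1 - ∑ j, u j := by
  obtain ⟨hord, heq⟩ := hy
  have hprod : ∏ j, y j ≠ 0 := Finset.prod_ne_zero_iff.2 fun j _ => (hord j).1
  have h := congrArg HahnSeries.order (heq i)
  rwa [HahnSeries.order_mul (Tpow_ne_zero _) (hord i).1,
    HahnSeries.order_mul (Tpow_ne_zero _) (inv_ne_zero hprod), HahnSeries.order_inv hprod,
    HahnSeries.order_prod _ _ fun j _ => (hord j).1, Finset.sum_eq_zero fun j _ => (hord j).2,
    order_Tpow, order_Tpow, (hord i).2, neg_zero, add_zero, add_zero] at h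

theorem isCriticalPoint_iff (hu : ∀ i, u i = 1 - ∑ j, u j) :
    IsCriticalPoint u y ↔ ∃ ζ : ℂ, ζ ^ (n + 1) = 1 ∧ ∀ i, y i = HahnSeries.C ζ := by
  have hcancel (i : Fin n) :
      Tpow (u i) * y i = Tpow (1 - ∑ j, u j) * (∏ j, y j)⁻¹ ↔ y i = (∏ j, y j)⁻¹ := by
    rw [← hu i]
    exact mul_right_inj' (Tpow_ne_zero _)
  simp only [IsCriticalPoint, hcancel]
  constructor
  · rintro ⟨hord, hinv⟩
    obtain ⟨z, hz, hyz⟩ := (forall_eq_inv_prod_iff fun i => (hord i).1).1 hinv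
    rw [Fintype.card_fin] at hz
    obtain ⟨ζ, hζ, rfl⟩ := exists_eq_of_pow_eq_one HahnSeries.C n.succ_ne_zero hz
    exact ⟨ζ, hζ, hyz⟩
  · rintro ⟨ζ, hζ, hyζ⟩
    have hCζ : HahnSeries.C ζ ≠ (0 : HahnSeries ℝ ℂ) :=
      HahnSeries.C_ne_zero fun h => by simp [h] at hζ
    refine ⟨fun i => ⟨hyζ i ▸ hCζ, hyζ i ▸ HahnSeries.order_C⟩, ?_⟩
    refine (forall_eq_inv_prod_iff fun i => hyζ i ▸ hCζ).2 ⟨HahnSeries.C ζ, ?_, hyζ⟩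
    rw [Fintype.card_fin, ← map_pow, hζ, map_one]

end

theorem clifford_torus_critical_points_general (n : ℕ) (u : Fin n → ℝ) :
    ((∃ y : Fin n → HahnSeries ℝ ℂ,
        (∀ i, y i ≠ 0 ∧ (y i).order = 0) ∧
        (∀ i, Tpow (u i) * y i = Tpow (1 - ∑ j, u j) * (∏ j, y j)⁻¹)) ↔
      (∀ i, u i = 1 / ((n : ℝ) + 1))) ∧
    ((∀ i, u i = 1 / ((n : ℝ) + 1)) →
      ∀ y : Fin n → HahnSeries ℝ ℂ,
        ((∀ i, y i ≠ 0 ∧ (y i).order = 0) ∧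
          (∀ i, Tpow (u i) * y i = Tpow (1 - ∑ j, u j) * (∏ j, y j)⁻¹)) ↔
        (∃ ζ : ℂ, ζ ^ (n + 1) = 1 ∧ ∀ i, y i = HahnSeries.C ζ)) := by
  have balanced_iff := forall_eq_one_sub_sum_iff u
  rw [Fintype.card_fin] at balanced_iff
  have solutions_iff (hu : ∀ i, u i = 1 / ((n : ℝ) + 1)) (y : Fin n → HahnSeries ℝ ℂ) :=
    isCriticalPoint_iff (y := y) (balanced_iff.2 hu)
  refine ⟨⟨fun ⟨y, hy⟩ => balanced_iff.1 (IsCriticalPoint.eq_one_sub_sum hy), fun hu => ?_⟩,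
    solutions_iff⟩
  exact ⟨fun _ => 1, (solutions_iff hu _).2 ⟨1, one_pow _, fun _ => (map_one HahnSeries.C).symm⟩⟩

/-- Critical point equation of the potential function of a Lagrangian torus fiber
in `ℂPⁿ`, after substituting `yᵢ = e^{xᵢ}`.  (a) The system
`T^{uᵢ}·yᵢ = T^{1−Σu}·(y₁⋯yₙ)⁻¹` (with all `yᵢ ≠ 0` of order `0`) has a solution
iff `uᵢ = 1/(n+1)` for all `i`; (b) in that case the solutions are exactly the
constant tuples `yᵢ = ζ·1` with `ζ^{n+1} = 1` (the Clifford torus case). -/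
theorem clifford_torus_critical_points (n : ℕ) (hn : 1 ≤ n) (u : Fin n → ℝ) :
    ((∃ y : Fin n → HahnSeries ℝ ℂ,
        (∀ i, y i ≠ 0 ∧ (y i).order = 0) ∧
        (∀ i, Tpow (u i) * y i = Tpow (1 - ∑ j, u j) * (∏ j, y j)⁻¹)) ↔
      (∀ i, u i = 1 / ((n : ℝ) + 1))) ∧
    ((∀ i, u i = 1 / ((n : ℝ) + 1)) →
      ∀ y : Fin n → HahnSeries ℝ ℂ,
        ((∀ i, y i ≠ 0 ∧ (y i).order = 0) ∧
          (∀ i, Tpow (u i) * y i = Tpow (1 - ∑ j, u j) * (∏ j, y j)⁻¹)) ↔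
        (∃ ζ : ℂ, ζ ^ (n + 1) = 1 ∧ ∀ i, y i = HahnSeries.C ζ)) :=
  clifford_torus_critical_points_general n u
end

section
/- The universal Novikov field Λ is a subfield of HahnSeries ℝ ℚ: for every f ∈ Λ with f ≠ 0 there exists g ∈ Λ with f·g = 1. -/
/-- Membership in the universal Novikov field `Λ`: a Hahn series
`f ∈ HahnSeries ℝ ℚ` belongs to `Λ` iff its support meets every half-line
`(−∞, C]` in a finite set. -/
def IsNovikov (f : HahnSeries ℝ ℚ) : Prop :=
  ∀ C : ℝ, (f.support ∩ Set.Iic C).Finite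

/-!
Series with locally-finite-below support form a subring, because the sum of two subsets of `ℝ`
that are finite below every bound is again such a set. A nonzero Hahn series `f` of order `v` and
leading coefficient `c` has inverse `c⁻¹ T^(-v) · ∑ₙ uⁿ`, where `u = 1 - c⁻¹ T^(-v) f` lies in the
subring and has positive order `ε`; since `uⁿ` has order `n ε`, only finitely many powers reach
below any bound `C`, so the sum stays in the subring.
-/

open Set Pointwise HahnSeries

theorem bddBelow_of_forall_finite_inter_Iic {α : Type*} [LinearOrder α] [Nonempty α] {s : Set α}
    (hs : ∀ C, (s ∩ Iic C).Finite) : BddBelow s := by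
  obtain ⟨c⟩ := ‹Nonempty α›
  exact ((hs c).bddBelow.union bddBelow_Ici).mono fun x hx => (le_total x c).imp (⟨hx, ·⟩) id

theorem finite_add_inter_Iic {Γ : Type*} [AddCommGroup Γ] [LinearOrder Γ] [IsOrderedAddMonoid Γ]
    {s t : Set Γ} (hs : ∀ C, (s ∩ Iic C).Finite) (ht : ∀ C, (t ∩ Iic C).Finite)
    (C : Γ) : ((s + t) ∩ Iic C).Finite := by
  obtain ⟨a, ha⟩ := bddBelow_of_forall_finite_inter_Iic hs
  obtain ⟨b, hb⟩ := bddBelow_of_forall_finite_inter_Iic ht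
  refine ((hs (C - b)).add (ht (C - a))).subset ?_
  rintro _ ⟨⟨x, hx, y, hy, rfl⟩, hxy : x + y ≤ C⟩
  exact ⟨x, ⟨hx, le_sub_iff_add_le.2 ((add_le_add le_rfl (hb hy)).trans hxy)⟩,
    y, ⟨hy, le_sub_iff_add_le'.2 ((add_le_add (ha hx) le_rfl).trans hxy)⟩, rfl⟩

def novikovSubring : Subring (HahnSeries ℝ ℚ) where
  carrier := {f | IsNovikov f}
  zero_mem' C := by simp
  one_mem' C := (finite_singleton 0).subset
    (inter_subset_left.trans (support_one (R := ℚ) (Γ := ℝ)).subset)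
  add_mem' hf hg C := ((hf C).union (hg C)).subset fun x ⟨hx, hxC⟩ =>
    (support_add_subset _ _ hx).imp (⟨·, hxC⟩) (⟨·, hxC⟩)
  neg_mem' {f} hf C := support_neg (x := f) ▸ hf C
  mul_mem' hf hg C := (finite_add_inter_Iic hf hg C).subset
    (inter_subset_inter_left _ support_mul_subset)

theorem single_mem_novikovSubring (a : ℝ) (r : ℚ) : single a r ∈ novikovSubring := fun _ =>
  (finite_singleton a).subset (inter_subset_left.trans support_single_subset)

theorem hsum_powers_mem_novikovSubring {u : HahnSeries ℝ ℚ} (hu : u ∈ novikovSubring) :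
    (SummableFamily.powers u).hsum ∈ novikovSubring := by
  obtain rfl | hu0 := eq_or_ne u 0
  · simp [SummableFamily.hsum_single]
  by_cases hpos : 0 < u.orderTop
  swap
  · simp [SummableFamily.powers_of_not_orderTop_pos hpos, SummableFamily.hsum_single]
  have hord : 0 < u.order := (zero_lt_orderTop_iff hu0).1 hpos
  intro C
  obtain ⟨N, hN⟩ := Archimedean.arch C hord
  refine ((finite_Iic N).biUnion fun n _ => pow_mem hu n C).subset ?_
  rintro x ⟨hx, hxC⟩
  obtain ⟨n, hn⟩ := mem_iUnion.1 (SummableFamily.support_hsum_subset hx)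
  rw [SummableFamily.powers_of_orderTop_pos hpos] at hn
  refine mem_iUnion₂.2 ⟨n, ?_, hn, hxC⟩
  have : n • u.order ≤ N • u.order :=
    calc n • u.order = (u ^ n).order := (order_pow u n).symm
      _ ≤ x := order_le_of_coeff_ne_zero hn
      _ ≤ C := hxC
      _ ≤ N • u.order := hN
  exact (nsmul_le_nsmul_iff_left hord).1 this

def novikovSubfield : Subfield (HahnSeries ℝ ℚ) where
  __ := novikovSubring
  inv_mem' f hf := by
    rw [inv_def]
    exact mul_mem (single_mem_novikovSubring _ _) <| hsum_powers_mem_novikovSubring <|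
      sub_mem (one_mem _) (mul_mem (single_mem_novikovSubring _ _) hf)

/-- The universal Novikov field `Λ` is a subfield of the field
`HahnSeries ℝ ℚ`: every nonzero `f ∈ Λ` has a multiplicative inverse lying
in `Λ`. -/
theorem novikov_isSubfield :
    ∀ f : HahnSeries ℝ ℚ, IsNovikov f → f ≠ 0 →
      ∃ g : HahnSeries ℝ ℚ, IsNovikov g ∧ f * g = 1 :=
  fun f hf hf0 => ⟨f⁻¹, novikovSubfield.inv_mem hf, mul_inv_cancel₀ hf0⟩
end
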